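/- Let A* > 0 and B* be constants, and let (σ_n²)_{n≥1} be a nonnegative real sequence with σ_n² = A*·(log n)³ + B*·(log n)² + O(log n). Then, as n → ∞, (1/θ(n−1)) · Σ_{i=1}^{n−1} |σ_n² − σ_i²|^{3/2}/(n−i) = O((log n)²); equivalently, E[ ( |σ_n² − σ_{I_n}²| / (A*·(log n)³) )^{3/2} ] = O((log n)^{−5/2}), where I_n has P(I_n = i) = 1/((n−i)·θ(n−1)) for 1 ≤ i ≤ n−1. -/

import Mathlib

open MeasureTheory Filter Real Asymptotics

noncomputable section

/-- The harmonic sum `θ(n) = ∑_{i=1}^n 1/i`. -/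
def harmSum (n : ℕ) : ℝ := ∑ i ∈ Finset.Icc 1 n, (1 : ℝ) / i

/-!
Write `L = log n` and `u_i = log n - log i`. Since the cubic `A x³ + B x²` has slope `O(L²)` on
`[0, L]` and the error term is `O(L)`, `|σ_n² - σ_i²| ≤ D L² u_i + E L`. After raising to the
power `3/2`, the main part contributes `L³ ∑ u_i^{3/2} / (n - i)`, and this kernel sum is bounded
uniformly in `n`: with `r = n / i`, `(log r)^{3/2} ≤ 2√2 (r - 1) r^{-1/4}`, so the `i`-th term is
`O(n^{-1/4} i^{-3/4})`, which sums to `O(1)`. The error part contributes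
`L^{3/2} θ(n - 1) = O(L^{5/2})`. Dividing by `θ(n - 1) ≥ L` gives `O(L²)`, and the normalised
sum is that divided by `(A* L³)^{3/2}`.
-/

lemma add_rpow_le_two_rpow_mul {a b p : ℝ} (ha : 0 ≤ a) (hb : 0 ≤ b) (hp : 1 ≤ p) :
    (a + b) ^ p ≤ 2 ^ (p - 1) * (a ^ p + b ^ p) := by
  exact_mod_cast NNReal.rpow_add_le_mul_rpow_add_rpow ⟨a, ha⟩ ⟨b, hb⟩ hp

lemma log_rpow_three_halves_le {r : ℝ} (hr : 1 ≤ r) :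
    log r ^ (3 / 2 : ℝ) ≤ 2 * √2 * (r - 1) / r ^ (1 / 4 : ℝ) := by
  set s := r ^ (1 / 4 : ℝ) with hs
  have hs1 : 1 ≤ s := one_le_rpow hr (by norm_num)
  have hrs : r = s ^ 4 := by
    rw [hs, ← rpow_natCast, ← rpow_mul (by linarith)]; norm_num
  have hu0 : 0 ≤ log r := log_nonneg hr
  -- `log r = 4 log s ≤ 4 (s - 1)` controls both factors of `log r ^ (3/2) = log r * √(log r)`
  have hu : log r ≤ 4 * (s - 1) := by
    rw [hrs, log_pow]; push_cast; linarith [log_le_sub_one_of_pos (by linarith : 0 < s)]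
  have hu_lin : log r ≤ 2 * (r - 1) / s ^ 2 := by
    rw [le_div_iff₀ (by positivity), show 2 * (r - 1) = 2 * (s ^ 4 - 1) by rw [hrs]]
    nlinarith [mul_le_mul_of_nonneg_right hu (sq_nonneg s),
      mul_nonneg (sub_nonneg.2 hs1) (sq_nonneg (s - 1))]
  have hu_sqrt : √(log r) ≤ √2 * s := by
    rw [← sqrt_sq (by positivity : 0 ≤ s), ← sqrt_mul zero_le_two]
    exact sqrt_le_sqrt (by nlinarith)
  calc log r ^ (3 / 2 : ℝ) = log r * √(log r) := by
        rw [sqrt_eq_rpow, ← rpow_one_add' hu0 (by norm_num)]; norm_num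
    _ ≤ 2 * (r - 1) / s ^ 2 * (√2 * s) := by gcongr
    _ = 2 * √2 * (r - 1) / s := by field_simp

lemma log_sub_log_rpow_three_halves_div_le {x y : ℝ} (hy : 0 < y) (hyx : y ≤ x) :
    (log x - log y) ^ (3 / 2 : ℝ) / (x - y) ≤ 2 * √2 * y ^ ((1 / 4 : ℝ) - 1) / x ^ (1 / 4 : ℝ) := by
  rcases hyx.eq_or_lt with rfl | hlt
  · simp only [sub_self, div_zero]; positivity
  have hx : 0 < x := hy.trans hlt
  have hr : 1 ≤ x / y := by rw [le_div_iff₀ hy]; linarith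
  calc (log x - log y) ^ (3 / 2 : ℝ) / (x - y)
      ≤ 2 * √2 * (x / y - 1) / (x / y) ^ (1 / 4 : ℝ) / (x - y) := by
        rw [← log_div hx.ne' hy.ne']
        exact div_le_div_of_nonneg_right (log_rpow_three_halves_le hr) (by linarith)
    _ = 2 * √2 * y ^ ((1 / 4 : ℝ) - 1) / x ^ (1 / 4 : ℝ) := by
        rw [div_rpow hx.le hy.le, rpow_sub_one hy.ne']
        have : x - y ≠ 0 := by linarith
        field_simp

lemma sum_Icc_rpow_sub_one_le {s : ℝ} (hs0 : 0 < s) (hs1 : s ≤ 1) (m : ℕ) :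
    ∑ i ∈ Finset.Icc 1 m, (i : ℝ) ^ (s - 1) ≤ m ^ s / s := by
  induction m with
  | zero => simp [zero_rpow hs0.ne']
  | succ m ih =>
    rw [Finset.sum_Icc_succ_top (by omega)]
    have hm : (0 : ℝ) < m + 1 := by positivity
    -- Bernoulli: `(m / (m + 1)) ^ s ≤ 1 - s / (m + 1)`
    have hbern := rpow_one_add_le_one_add_mul_self (s := -1 / (m + 1))
      (by rw [neg_div, neg_le_neg_iff, div_le_one hm]; linarith) hs0.le hs1
    rw [show 1 + -1 / ((m : ℝ) + 1) = m / (m + 1) by field_simp; ring,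
      div_rpow (by positivity) hm.le, div_le_iff₀ (by positivity)] at hbern
    have hstep : ((m : ℝ) + 1) ^ (s - 1) ≤ (((m : ℝ) + 1) ^ s - (m : ℝ) ^ s) / s := by
      rw [le_div_iff₀ hs0, rpow_sub_one hm.ne']
      have : (m : ℝ) ^ s ≤ (m + 1) ^ s - s * ((m + 1) ^ s / (m + 1)) :=
        hbern.trans_eq (by ring)
      linarith
    push_cast
    calc _ ≤ (m : ℝ) ^ s / s + ((((m : ℝ) + 1) ^ s - (m : ℝ) ^ s) / s) := add_le_add ih hstep
      _ = _ := by ring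

lemma sum_rpow_div_const_div {ι : Type*} (s : Finset ι) {f : ι → ℝ} (hf : ∀ i, 0 ≤ f i)
    (w : ι → ℝ) {c : ℝ} (hc : 0 ≤ c) (p : ℝ) :
    ∑ i ∈ s, (f i / c) ^ p / w i = (∑ i ∈ s, f i ^ p / w i) / c ^ p := by
  rw [Finset.sum_div]
  refine Finset.sum_congr rfl fun i _ => ?_
  rw [div_rpow (hf i) hc]
  ring

lemma log_natCast_le_log_natCast {i n : ℕ} (h : i ≤ n) : log i ≤ log n := by
  rcases Nat.eq_zero_or_pos i with rfl | hi
  · simpa using log_natCast_nonneg n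
  · exact log_le_log (by exact_mod_cast hi) (by exact_mod_cast h)

lemma eventually_one_le_log_natCast : ∀ᶠ n : ℕ in atTop, 1 ≤ log n :=
  (tendsto_log_atTop.comp tendsto_natCast_atTop_atTop).eventually_ge_atTop 1

lemma exists_abs_le_mul_add_one_of_isBigO {f g : ℕ → ℝ} (hg : ∀ k, 0 ≤ g k)
    (hfg : f =O[atTop] g) : ∃ C, 0 ≤ C ∧ ∀ k, |f k| ≤ C * (g k + 1) := by
  have hfg' : f =O[atTop] fun k => g k + 1 :=
    hfg.trans <| isBigO_of_le _ fun k => by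
      rw [norm_of_nonneg (hg k), norm_of_nonneg (by linarith [hg k])]; linarith
  obtain ⟨C, hC, hbound⟩ := bound_of_isBigO_nat_atTop hfg'
  refine ⟨C, hC.le, fun k => ?_⟩
  have hk : 0 < g k + 1 := by linarith [hg k]
  simpa [norm_of_nonneg hk.le] using hbound hk.ne'

lemma abs_cubic_sub_cubic_le {A B x y : ℝ} (hy : 0 ≤ y) (hyx : y ≤ x) (hx : 1 ≤ x) :
    |A * x ^ 3 + B * x ^ 2 - (A * y ^ 3 + B * y ^ 2)| ≤ (3 * |A| + 2 * |B|) * x ^ 2 * (x - y) := by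
  have hfactor : A * x ^ 3 + B * x ^ 2 - (A * y ^ 3 + B * y ^ 2)
      = (A * (x ^ 2 + x * y + y ^ 2) + B * (x + y)) * (x - y) := by ring
  rw [hfactor, abs_mul, abs_of_nonneg (sub_nonneg.2 hyx)]
  gcongr
  calc |A * (x ^ 2 + x * y + y ^ 2) + B * (x + y)|
      ≤ |A| * (x ^ 2 + x * y + y ^ 2) + |B| * (x + y) := by
        refine (abs_add_le _ _).trans_eq ?_
        rw [abs_mul, abs_mul, abs_of_nonneg (by positivity : 0 ≤ x ^ 2 + x * y + y ^ 2),
          abs_of_nonneg (by linarith : 0 ≤ x + y)]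
    _ ≤ |A| * (3 * x ^ 2) + |B| * (2 * x ^ 2) := by
        gcongr <;> nlinarith
    _ = (3 * |A| + 2 * |B|) * x ^ 2 := by ring

lemma harmSum_eq_harmonic (n : ℕ) : harmSum n = harmonic n := by
  simp [harmSum, harmonic_eq_sum_Icc]

lemma sum_Icc_one_div_sub_eq_harmSum (n : ℕ) :
    ∑ i ∈ Finset.Icc 1 (n - 1), 1 / ((n : ℝ) - i) = harmSum (n - 1) := by
  refine Finset.sum_nbij' (n - ·) (n - ·) ?_ ?_ ?_ ?_ ?_ <;> intro i hi <;>
    simp only [Finset.mem_Icc] at hi ⊢ <;> first | omega | rw [Nat.cast_sub (by omega)]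

lemma log_le_harmSum_sub_one (n : ℕ) : log n ≤ harmSum (n - 1) := by
  rcases Nat.eq_zero_or_pos n with rfl | hn
  · simp [harmSum]
  simpa [harmSum_eq_harmonic, Nat.sub_add_cancel hn] using log_add_one_le_harmonic (n - 1)

lemma harmSum_sub_one_le (n : ℕ) : harmSum (n - 1) ≤ 1 + log n := by
  rw [harmSum_eq_harmonic]
  refine (harmonic_le_one_add_log _).trans ?_
  gcongr 1 + ?_
  exact log_natCast_le_log_natCast (Nat.sub_le n 1)

lemma sum_Icc_log_sub_log_rpow_three_halves_div_le (n : ℕ) :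
    ∑ i ∈ Finset.Icc 1 (n - 1), (log n - log i) ^ (3 / 2 : ℝ) / ((n : ℝ) - i) ≤ 8 * √2 := by
  have hterm : ∀ i ∈ Finset.Icc 1 (n - 1), (log n - log i) ^ (3 / 2 : ℝ) / ((n : ℝ) - i)
      ≤ 2 * √2 / (n : ℝ) ^ (1 / 4 : ℝ) * (i : ℝ) ^ ((1 / 4 : ℝ) - 1) := by
    intro i hi
    rw [Finset.mem_Icc] at hi
    have hin : (i : ℝ) ≤ n := by exact_mod_cast (show i ≤ n by omega)
    have hi0 : (0 : ℝ) < i := by exact_mod_cast hi.1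
    exact (log_sub_log_rpow_three_halves_div_le hi0 hin).trans_eq (by ring)
  have hratio : ((n - 1 : ℕ) : ℝ) ^ (1 / 4 : ℝ) / (n : ℝ) ^ (1 / 4 : ℝ) ≤ 1 :=
    div_le_one_of_le₀ (rpow_le_rpow (by positivity) (by exact_mod_cast Nat.sub_le n 1)
      (by norm_num)) (by positivity)
  calc _ ≤ ∑ i ∈ Finset.Icc 1 (n - 1),
        2 * √2 / (n : ℝ) ^ (1 / 4 : ℝ) * (i : ℝ) ^ ((1 / 4 : ℝ) - 1) :=
        Finset.sum_le_sum hterm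
    _ = 2 * √2 / (n : ℝ) ^ (1 / 4 : ℝ) * ∑ i ∈ Finset.Icc 1 (n - 1), (i : ℝ) ^ ((1 / 4 : ℝ) - 1) :=
        (Finset.mul_sum ..).symm
    _ ≤ 2 * √2 / (n : ℝ) ^ (1 / 4 : ℝ) * (((n - 1 : ℕ) : ℝ) ^ (1 / 4 : ℝ) / (1 / 4)) := by
        gcongr
        exact sum_Icc_rpow_sub_one_le (by norm_num) (by norm_num) _
    _ = 8 * √2 * (((n - 1 : ℕ) : ℝ) ^ (1 / 4 : ℝ) / (n : ℝ) ^ (1 / 4 : ℝ)) := by ring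
    _ ≤ 8 * √2 := mul_le_of_le_one_right (by positivity) hratio

lemma abs_sub_le_of_abs_sub_cubic_log_le {A B C : ℝ} {σ : ℕ → ℝ} (hC0 : 0 ≤ C)
    (hC : ∀ k : ℕ, |σ k - (A * log k ^ 3 + B * log k ^ 2)| ≤ C * (log k + 1))
    {n i : ℕ} (hn : 1 ≤ log n) (hi : i ≤ n) :
    |σ n - σ i| ≤ (3 * |A| + 2 * |B|) * log n ^ 2 * (log n - log i) + 4 * C * log n := by
  have hi0 : 0 ≤ log i := log_natCast_nonneg i
  have hin : log i ≤ log n := log_natCast_le_log_natCast hi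
  set P : ℝ → ℝ := fun t => A * t ^ 3 + B * t ^ 2
  have hCi : C * (log i + 1) ≤ C * (log n + 1) := by gcongr
  calc |σ n - σ i| = |(P (log n) - P (log i)) + (σ n - P (log n)) + (P (log i) - σ i)| := by
        congr 1; ring
    _ ≤ |P (log n) - P (log i)| + |σ n - P (log n)| + |σ i - P (log i)| := by
        rw [abs_sub_comm (σ i)]; exact abs_add_three _ _ _
    _ ≤ (3 * |A| + 2 * |B|) * log n ^ 2 * (log n - log i) + C * (log n + 1) + C * (log i + 1) :=
        add_le_add_three (abs_cubic_sub_cubic_le hi0 hin hn) (hC n) (hC i)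
    _ ≤ (3 * |A| + 2 * |B|) * log n ^ 2 * (log n - log i) + 4 * C * log n := by nlinarith

lemma rpow_three_halves_le_of_le_mul_add {x a u b : ℝ} (hx : 0 ≤ x) (ha : 0 ≤ a) (hu : 0 ≤ u)
    (hb : 0 ≤ b) (h : x ≤ a * u + b) :
    x ^ (3 / 2 : ℝ) ≤ √2 * (a ^ (3 / 2 : ℝ) * u ^ (3 / 2 : ℝ) + b ^ (3 / 2 : ℝ)) :=
  calc x ^ (3 / 2 : ℝ) ≤ (a * u + b) ^ (3 / 2 : ℝ) := rpow_le_rpow hx h (by norm_num)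
    _ ≤ 2 ^ ((3 / 2 : ℝ) - 1) * ((a * u) ^ (3 / 2 : ℝ) + b ^ (3 / 2 : ℝ)) :=
        add_rpow_le_two_rpow_mul (by positivity) hb (by norm_num)
    _ = _ := by rw [mul_rpow ha hu, sqrt_eq_rpow]; norm_num

lemma sum_abs_sub_rpow_three_halves_div_le {τ : ℕ → ℝ} {a b : ℝ} (ha : 0 ≤ a) (hb : 0 ≤ b)
    {n : ℕ} (hτ : ∀ i ≤ n, |τ n - τ i| ≤ a * (log n - log i) + b) :
    ∑ i ∈ Finset.Icc 1 (n - 1), |τ n - τ i| ^ (3 / 2 : ℝ) / ((n : ℝ) - i)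
      ≤ 16 * a ^ (3 / 2 : ℝ) + √2 * b ^ (3 / 2 : ℝ) * harmSum (n - 1) := by
  have hterm : ∀ i ∈ Finset.Icc 1 (n - 1), |τ n - τ i| ^ (3 / 2 : ℝ) / ((n : ℝ) - i)
      ≤ √2 * a ^ (3 / 2 : ℝ) * ((log n - log i) ^ (3 / 2 : ℝ) / ((n : ℝ) - i))
        + √2 * b ^ (3 / 2 : ℝ) * (1 / ((n : ℝ) - i)) := by
    intro i hi
    rw [Finset.mem_Icc] at hi
    have hni : (0 : ℝ) < n - i := sub_pos.2 (by exact_mod_cast (show i < n by omega))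
    have hu : 0 ≤ log n - log i := sub_nonneg.2 (log_natCast_le_log_natCast (by omega))
    calc _ ≤ √2 * (a ^ (3 / 2 : ℝ) * (log n - log i) ^ (3 / 2 : ℝ) + b ^ (3 / 2 : ℝ))
          / ((n : ℝ) - i) := by
          gcongr
          exact rpow_three_halves_le_of_le_mul_add (abs_nonneg _) ha hu hb (hτ i (by omega))
      _ = _ := by ring
  calc _ ≤ ∑ i ∈ Finset.Icc 1 (n - 1),
        (√2 * a ^ (3 / 2 : ℝ) * ((log n - log i) ^ (3 / 2 : ℝ) / ((n : ℝ) - i))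
          + √2 * b ^ (3 / 2 : ℝ) * (1 / ((n : ℝ) - i))) :=
        Finset.sum_le_sum hterm
    _ = √2 * a ^ (3 / 2 : ℝ)
          * ∑ i ∈ Finset.Icc 1 (n - 1), (log n - log i) ^ (3 / 2 : ℝ) / ((n : ℝ) - i)
        + √2 * b ^ (3 / 2 : ℝ) * harmSum (n - 1) := by
        rw [Finset.sum_add_distrib, ← Finset.mul_sum, ← Finset.mul_sum,
          sum_Icc_one_div_sub_eq_harmSum]
    _ ≤ √2 * a ^ (3 / 2 : ℝ) * (8 * √2) + √2 * b ^ (3 / 2 : ℝ) * harmSum (n - 1) := by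
        gcongr
        exact sum_Icc_log_sub_log_rpow_three_halves_div_le n
    _ = _ := by
        rw [show √2 * a ^ (3 / 2 : ℝ) * (8 * √2) = 8 * (√2 * √2) * a ^ (3 / 2 : ℝ) by ring,
          mul_self_sqrt zero_le_two]
        ring

lemma sum_abs_sub_rpow_three_halves_div_le_log_pow_three {τ : ℕ → ℝ} {D E : ℝ} (hD : 0 ≤ D)
    (hE : 0 ≤ E) {n : ℕ} (hn : 1 ≤ log n)
    (hτ : ∀ i ≤ n, |τ n - τ i| ≤ D * log n ^ 2 * (log n - log i) + E * log n) :
    ∑ i ∈ Finset.Icc 1 (n - 1), |τ n - τ i| ^ (3 / 2 : ℝ) / ((n : ℝ) - i)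
      ≤ (16 * D ^ (3 / 2 : ℝ) + 2 * √2 * E ^ (3 / 2 : ℝ)) * log n ^ 3 := by
  set L := log n
  have hL0 : 0 ≤ L := by linarith
  have hmain : (D * L ^ 2) ^ (3 / 2 : ℝ) = D ^ (3 / 2 : ℝ) * L ^ 3 := by
    rw [mul_rpow hD (by positivity), ← rpow_natCast, ← rpow_mul hL0]; norm_num
  have herror : (E * L) ^ (3 / 2 : ℝ) * harmSum (n - 1) ≤ E ^ (3 / 2 : ℝ) * (2 * L ^ 3) := by
    have hL32 : L ^ (3 / 2 : ℝ) ≤ L ^ 2 := by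
      rw [← rpow_natCast]; exact rpow_le_rpow_of_exponent_le hn (by norm_num)
    rw [mul_rpow hE hL0, mul_assoc]
    refine mul_le_mul_of_nonneg_left ?_ (by positivity)
    calc L ^ (3 / 2 : ℝ) * harmSum (n - 1) ≤ L ^ 2 * (1 + L) :=
          mul_le_mul hL32 (harmSum_sub_one_le n) (hL0.trans (log_le_harmSum_sub_one n))
            (by positivity)
      _ ≤ 2 * L ^ 3 := by nlinarith
  calc _ ≤ 16 * (D * L ^ 2) ^ (3 / 2 : ℝ) + √2 * (E * L) ^ (3 / 2 : ℝ) * harmSum (n - 1) :=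
        sum_abs_sub_rpow_three_halves_div_le (by positivity) (by positivity) hτ
    _ ≤ 16 * (D ^ (3 / 2 : ℝ) * L ^ 3) + √2 * (E ^ (3 / 2 : ℝ) * (2 * L ^ 3)) := by
        rw [hmain, mul_assoc √2]; gcongr
    _ = _ := by ring

lemma isBigO_sum_abs_sub_rpow_three_halves_div {A B : ℝ} {σ : ℕ → ℝ}
    (hσ : (fun n : ℕ => σ n - (A * log n ^ 3 + B * log n ^ 2)) =O[atTop] fun n : ℕ => log n) :
    (fun n : ℕ => ∑ i ∈ Finset.Icc 1 (n - 1), |σ n - σ i| ^ (3 / 2 : ℝ) / ((n : ℝ) - i))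
      =O[atTop] fun n : ℕ => log n ^ 3 := by
  obtain ⟨C, hC0, hC⟩ := exists_abs_le_mul_add_one_of_isBigO log_natCast_nonneg hσ
  refine IsBigO.of_bound
    (16 * (3 * |A| + 2 * |B|) ^ (3 / 2 : ℝ) + 2 * √2 * (4 * C) ^ (3 / 2 : ℝ)) ?_
  filter_upwards [eventually_one_le_log_natCast] with n hn
  have hterm_nonneg (i : ℕ) (hi : i ∈ Finset.Icc 1 (n - 1)) :
      0 ≤ |σ n - σ i| ^ (3 / 2 : ℝ) / ((n : ℝ) - i) :=
    div_nonneg (by positivity) (sub_nonneg.2 (by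
      exact_mod_cast (Finset.mem_Icc.1 hi).2.trans (Nat.sub_le n 1)))
  rw [norm_of_nonneg (Finset.sum_nonneg hterm_nonneg), norm_of_nonneg (by positivity)]
  exact sum_abs_sub_rpow_three_halves_div_le_log_pow_three (by positivity) (by positivity) hn
    fun i hi => abs_sub_le_of_abs_sub_cubic_log_le hC0 hC hn hi

lemma isBigO_one_div_harmSum_sub_one :
    (fun n : ℕ => 1 / harmSum (n - 1)) =O[atTop] fun n : ℕ => (log n)⁻¹ := by
  refine IsBigO.of_bound 1 ?_
  filter_upwards [eventually_one_le_log_natCast] with n hn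
  have hθ := log_le_harmSum_sub_one n
  rw [one_mul, one_div, norm_inv, norm_inv, norm_of_nonneg (by linarith),
    norm_of_nonneg (by linarith)]
  exact inv_anti₀ (by linarith) hθ

lemma isBigO_inv_rpow_mul_log_pow_three {a : ℝ} (ha : 0 ≤ a) (p : ℝ) :
    (fun n : ℕ => ((a * log n ^ 3) ^ p)⁻¹) =O[atTop] fun n : ℕ => log n ^ (-(3 * p)) := by
  refine ((isBigO_refl _ atTop).const_mul_left (a ^ p)⁻¹).congr_left fun n => ?_
  have hL := log_natCast_nonneg n
  rw [mul_rpow ha (by positivity), ← rpow_natCast, ← rpow_mul hL, rpow_neg hL, mul_inv]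
  norm_num

theorem variance_difference_three_halves_bound_general
    (Astar Bstar : ℝ) (hA : 0 < Astar)
    (σsq : ℕ → ℝ)
    (hσ : (fun n : ℕ =>
        σsq n - (Astar * Real.log n ^ 3 + Bstar * Real.log n ^ 2))
      =O[atTop] (fun n : ℕ => Real.log n)) :
    ((fun n : ℕ => (1 / harmSum (n - 1)) *
        ∑ i ∈ Finset.Icc 1 (n - 1),
          |σsq n - σsq i| ^ ((3 : ℝ) / 2) / ((n : ℝ) - (i : ℝ)))
      =O[atTop] (fun n : ℕ => Real.log n ^ 2)) ∧
    ((fun n : ℕ => (1 / harmSum (n - 1)) *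
        ∑ i ∈ Finset.Icc 1 (n - 1),
          (|σsq n - σsq i| / (Astar * Real.log n ^ 3)) ^ ((3 : ℝ) / 2)
            / ((n : ℝ) - (i : ℝ)))
      =O[atTop] (fun n : ℕ => Real.log n ^ (-(5 : ℝ) / 2))) := by
  have hfirst : _ =O[atTop] fun n : ℕ => log n ^ 2 :=
    (isBigO_one_div_harmSum_sub_one.mul (isBigO_sum_abs_sub_rpow_three_halves_div hσ)).congr'
      EventuallyEq.rfl <| eventually_one_le_log_natCast.mono fun n hn => by
        field_simp
  refine ⟨hfirst, ?_⟩
  refine (hfirst.mul (isBigO_inv_rpow_mul_log_pow_three hA.le (3 / 2))).congr'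
    (Eventually.of_forall fun n => ?_) (eventually_one_le_log_natCast.mono fun n hn => ?_)
  · simp only
    rw [sum_rpow_div_const_div _ (fun i => abs_nonneg _) _ (by positivity)]
    ring
  · simp only
    rw [← rpow_natCast, ← rpow_add (by linarith)]
    norm_num

/-- if `σ_n² = A* (log n)³ + B* (log n)² + O(log n)` with `A* > 0`, then
`(1/θ(n−1)) ∑_{i=1}^{n−1} |σ_n² − σ_i²|^{3/2}/(n−i) = O((log n)²)`; equivalently
`E[(|σ_n² − σ_{I_n}²|/(A* (log n)³))^{3/2}] = O((log n)^{−5/2})`. -/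
theorem variance_difference_three_halves_bound
    (Astar Bstar : ℝ) (hA : 0 < Astar)
    (σsq : ℕ → ℝ) (hσnonneg : ∀ n, 0 ≤ σsq n)
    (hσ : (fun n : ℕ =>
        σsq n - (Astar * Real.log n ^ 3 + Bstar * Real.log n ^ 2))
      =O[atTop] (fun n : ℕ => Real.log n)) :
    ((fun n : ℕ => (1 / harmSum (n - 1)) *
        ∑ i ∈ Finset.Icc 1 (n - 1),
          |σsq n - σsq i| ^ ((3 : ℝ) / 2) / ((n : ℝ) - (i : ℝ)))
      =O[atTop] (fun n : ℕ => Real.log n ^ 2)) ∧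
    ((fun n : ℕ => (1 / harmSum (n - 1)) *
        ∑ i ∈ Finset.Icc 1 (n - 1),
          (|σsq n - σsq i| / (Astar * Real.log n ^ 3)) ^ ((3 : ℝ) / 2)
            / ((n : ℝ) - (i : ℝ)))
      =O[atTop] (fun n : ℕ => Real.log n ^ (-(5 : ℝ) / 2))) :=
  variance_difference_three_halves_bound_general Astar Bstar hA σsq hσ
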